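/- In any generalized grid graph, for every reachable vertex v there exists a minimum-weight directed path from (0,0) to v along which non-potent vertices appear only after all potent vertices; that is, the path consists of an initial segment of potent vertices (nonempty, since (0,0) is potent) followed by a possibly empty final segment of non-potent vertices. -/

import Mathlib

/-!
The path is built backwards from `v`, always stepping to an optimal predecessor. A non-potent
vertex may step to any of them, so it suffices that every potent vertex `v ≠ (0,0)` has a potent
optimal predecessor. If `v` is dominated, the dominating vertex is one. Otherwise the optimal
predecessor is the vertical one, `u = (i-1,d)`, and `c(u)` is at most the costs of the other two
predecessors `(i,d-1)` and `(i-1,d+1)` of `v`. Every vertex `u` with this property is potent, by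
induction on `c(u)`: a domination of `u` with a missing mismatch would make one of those two
vertices cheaper than `u` through a vertical edge of weight 0, and a domination by a vertex `q`
passes the property on to `q`, whose cost is `c(u) - 1`.
-/

namespace Stmt2

/-- Total weight of a list of vertices regarded as a walk. -/
def pathCost {V : Type*} (wt : V → V → ℕ) : List V → ℕ
  | [] => 0
  | [_] => 0
  | a :: b :: l => wt a b + pathCost wt (b :: l)

/-- `l` is a directed path (walk) from `s` to `v` in the graph with edge relation `E`. -/
def IsPath {V : Type*} (E : V → V → Prop) (s v : V) (l : List V) : Prop :=
  l.head? = some s ∧ l.getLast? = some v ∧ l.Chain' E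

/-- Shortest-path cost from `s` to `v`. -/
noncomputable def cost {V : Type*} (E : V → V → Prop) (wt : V → V → ℕ) (s v : V) : ℕ :=
  sInf { c | ∃ l : List V, IsPath E s v l ∧ pathCost wt l = c }

/-- Vertices of a generalized grid graph with rows `[0..N]` and diagonals `[-t..t]`. -/
def ggVertex (N t : ℕ) (v : ℤ × ℤ) : Prop :=
  0 ≤ v.1 ∧ v.1 ≤ (N : ℤ) ∧ -(t : ℤ) ≤ v.2 ∧ v.2 ≤ (t : ℤ)

/-- Edges of a generalized grid graph: deletion edges `(i,d) → (i+1,d-1)`,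
insertion edges `(i,d) → (i,d+1)`, vertical edges `(i,d) → (i+1,d)`;
present only when both endpoints are vertices. -/
def ggEdge (N t : ℕ) (u v : ℤ × ℤ) : Prop :=
  ggVertex N t u ∧ ggVertex N t v ∧
    (v = (u.1 + 1, u.2 - 1) ∨ v = (u.1, u.2 + 1) ∨ v = (u.1 + 1, u.2))

/-- Weights: a vertical edge `(i,d) → (i+1,d)` has weight `w (i+1) d`;
deletion and insertion edges have weight `1`. -/
def ggWt (w : ℤ → ℤ → ℕ) (u v : ℤ × ℤ) : ℕ :=
  if v = (u.1 + 1, u.2) then w v.1 v.2 else 1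

/-- A vertex `(i,d)` is reachable if `i + d ≥ 0`. -/
def Reachable (N t : ℕ) (v : ℤ × ℤ) : Prop := ggVertex N t v ∧ 0 ≤ v.1 + v.2

/-- Shortest-path cost `c(i,d)` from `(0,0)` in the generalized grid graph. -/
noncomputable def ggCost (N t : ℕ) (w : ℤ → ℤ → ℕ) (v : ℤ × ℤ) : ℕ :=
  cost (ggEdge N t) (ggWt w) (0, 0) v

/-- `(i,d)` is dominated by `(i,d-1)`. -/
def DomL (N t : ℕ) (w : ℤ → ℤ → ℕ) (v : ℤ × ℤ) : Prop :=
  Reachable N t v ∧ Reachable N t (v.1, v.2 - 1) ∧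
    ggCost N t w (v.1, v.2 - 1) + 1 = ggCost N t w v

/-- `(i,d)` is dominated by `(i-1,d+1)`. -/
def DomU (N t : ℕ) (w : ℤ → ℤ → ℕ) (v : ℤ × ℤ) : Prop :=
  Reachable N t v ∧ Reachable N t (v.1 - 1, v.2 + 1) ∧
    ggCost N t w (v.1 - 1, v.2 + 1) + 1 = ggCost N t w v

/-- Potency, defined by (well-founded, hence unambiguous) recursion in
lexicographic order: `(i,d)` is potent iff (dominated by `(i,d-1)` implies
`(i,d-1)` potent and `w (i+1) (d-1) = 1`) and (dominated by `(i-1,d+1)` implies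
`(i-1,d+1)` potent and `w i (d+1) = 1`). -/
inductive Potent (N t : ℕ) (w : ℤ → ℤ → ℕ) : ℤ × ℤ → Prop where
  | mk : ∀ v : ℤ × ℤ,
      (DomL N t w v → Potent N t w (v.1, v.2 - 1)) →
      (DomL N t w v → w (v.1 + 1) (v.2 - 1) = 1) →
      (DomU N t w v → Potent N t w (v.1 - 1, v.2 + 1)) →
      (DomU N t w v → w v.1 (v.2 + 1) = 1) →
      Potent N t w v

open Relation

section ShortestPath

variable {V : Type*} {E : V → V → Prop} {wt : V → V → ℕ} {s u v : V} {l : List V}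

lemma pathCost_append_singleton (h : l.getLast? = some u) (b : V) :
    pathCost wt (l ++ [b]) = pathCost wt l + wt u b := by
  induction l using pathCost.induct with
  | case1 => simp at h
  | case2 a =>
    obtain rfl : a = u := by simpa using h
    simp [pathCost]
  | case3 a c l ih =>
    simp only [List.cons_append, pathCost] at ih ⊢
    rw [ih (by simpa using h), Nat.add_assoc]

lemma IsPath.append_singleton (h : IsPath E s u l) (he : E u v) : IsPath E s v (l ++ [v]) := by
  obtain ⟨hs, hu, hl⟩ := h
  refine ⟨by simp [List.head?_append, hs], List.getLast?_concat,
    List.isChain_append.2 ⟨hl, .singleton v, ?_⟩⟩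
  simp_all

lemma IsPath.reflTransGen (h : IsPath E s v l) : ReflTransGen E s v := by
  obtain ⟨hs, hv, hl⟩ := h
  cases l with
  | nil => cases hs
  | cons a l =>
    cases hs
    exact List.relationReflTransGen_of_exists_isChain_cons l hl
      (Option.some.inj (List.getLast?_eq_some_getLast _ ▸ hv))

lemma exists_isPath_of_reflTransGen (h : ReflTransGen E s v) : ∃ l, IsPath E s v l := by
  induction h with
  | refl => exact ⟨[s], rfl, rfl, .singleton s⟩
  | tail _ he ih =>
    obtain ⟨l, hl⟩ := ih
    exact ⟨_, hl.append_singleton he⟩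

lemma cost_le_pathCost (h : IsPath E s v l) : cost E wt s v ≤ pathCost wt l :=
  Nat.sInf_le ⟨l, h, rfl⟩

lemma cost_self : cost E wt s s = 0 :=
  Nat.eq_zero_of_le_zero (cost_le_pathCost (show IsPath E s s [s] from ⟨rfl, rfl, .singleton s⟩))

lemma exists_isPath_pathCost_eq_cost (h : ReflTransGen E s v) :
    ∃ l, IsPath E s v l ∧ pathCost wt l = cost E wt s v := by
  obtain ⟨l, hl⟩ := exists_isPath_of_reflTransGen h
  exact Nat.sInf_mem (s := {c | ∃ l, IsPath E s v l ∧ pathCost wt l = c}) ⟨_, l, hl, rfl⟩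

lemma cost_le_cost_add (hu : ReflTransGen E s u) (he : E u v) :
    cost E wt s v ≤ cost E wt s u + wt u v := by
  obtain ⟨l, hl, hcost⟩ := exists_isPath_pathCost_eq_cost hu
  rw [← hcost, ← pathCost_append_singleton hl.2.1]
  exact cost_le_pathCost (hl.append_singleton he)

lemma IsPath.exists_pred (h : IsPath E s v l) (hvs : v ≠ s) :
    ∃ l' u, l = l' ++ [v] ∧ IsPath E s u l' ∧ E u v := by
  obtain ⟨hs, hv, hl⟩ := h
  obtain rfl | ⟨l', b, rfl⟩ := List.eq_nil_or_concat' l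
  · cases hs
  obtain rfl : b = v := by simpa using hv
  obtain rfl | ⟨l'', u, rfl⟩ := List.eq_nil_or_concat' l'
  · simp_all
  obtain ⟨hl', -, hu⟩ := List.isChain_append.1 hl
  refine ⟨l'' ++ [u], u, rfl, ⟨?_, List.getLast?_concat, hl'⟩, hu u (by simp) b (by simp)⟩
  simpa [List.head?_append] using hs

lemma exists_pred_cost_add_eq (hv : ReflTransGen E s v) (hvs : v ≠ s) :
    ∃ u, ReflTransGen E s u ∧ E u v ∧ cost E wt s u + wt u v = cost E wt s v := by
  obtain ⟨l, hl, hcost⟩ := exists_isPath_pathCost_eq_cost hv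
  obtain ⟨l', u, rfl, hl', he⟩ := hl.exists_pred hvs
  have hu := hl'.reflTransGen
  refine ⟨u, hu, he, le_antisymm ?_ (cost_le_cost_add hu he)⟩
  rw [← hcost, pathCost_append_singleton hl'.2.1]
  exact Nat.add_le_add_right (cost_le_pathCost hl') _

theorem exists_optimal_path_with_prefix (ρ : V → ℕ) (hρ : ∀ ⦃u v⦄, E u v → ρ u < ρ v)
    {P : V → Prop} (hs : P s)
    (hP : ∀ v, ReflTransGen E s v → v ≠ s → P v →
      ∃ u, ReflTransGen E s u ∧ E u v ∧ cost E wt s u + wt u v = cost E wt s v ∧ P u)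
    {v : V} (hv : ReflTransGen E s v) :
    ∃ l₁ l₂, IsPath E s v (l₁ ++ l₂) ∧ pathCost wt (l₁ ++ l₂) = cost E wt s v ∧ l₁ ≠ [] ∧
      (∀ x ∈ l₁, P x) ∧ ∀ x ∈ l₂, ¬ P x := by
  by_cases hvs : v = s
  · subst hvs
    exact ⟨[v], [], ⟨rfl, rfl, .singleton v⟩, cost_self.symm, by simp, by simpa using hs, by simp⟩
  obtain ⟨u, hu, he, hcost, hPu⟩ : ∃ u, ReflTransGen E s u ∧ E u v ∧
      cost E wt s u + wt u v = cost E wt s v ∧ (P v → P u) := by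
    by_cases hPv : P v
    · obtain ⟨u, hu, he, hcost, hPu⟩ := hP v hv hvs hPv
      exact ⟨u, hu, he, hcost, fun _ => hPu⟩
    · obtain ⟨u, hu, he, hcost⟩ := exists_pred_cost_add_eq hv hvs
      exact ⟨u, hu, he, hcost, hPv.elim⟩
  obtain ⟨l₁, l₂, hl, hlc, hne, h₁, h₂⟩ := exists_optimal_path_with_prefix ρ hρ hs hP hu
  have hpath := hl.append_singleton he
  have hpc : pathCost wt (l₁ ++ l₂ ++ [v]) = cost E wt s v := by
    rw [pathCost_append_singleton hl.2.1, hlc, hcost]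
  by_cases hPv : P v
  · obtain rfl : l₂ = [] := by
      obtain rfl | ⟨l₂, b, rfl⟩ := List.eq_nil_or_concat' l₂
      · rfl
      · obtain rfl : b = u := by simpa [← List.append_assoc] using hl.2.1
        exact absurd (hPu hPv) (h₂ _ (by simp))
    exact ⟨l₁ ++ [v], [], by simpa using hpath, by simpa using hpc, by simp,
      List.forall_mem_append.2 ⟨h₁, List.forall_mem_singleton.2 hPv⟩, by simp⟩
  · exact ⟨l₁, l₂ ++ [v], by simpa using hpath, by simpa using hpc, hne, h₁,
      List.forall_mem_append.2 ⟨h₂, List.forall_mem_singleton.2 hPv⟩⟩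
termination_by ρ v
decreasing_by exact hρ he

end ShortestPath

section GridGraph

variable {N t : ℕ} {w : ℤ → ℤ → ℕ}

lemma Reachable.of_ggEdge {u v : ℤ × ℤ} (hu : Reachable N t u) (he : ggEdge N t u v) :
    Reachable N t v := by
  obtain ⟨-, hv, rfl | rfl | rfl⟩ := he <;> exact ⟨hv, by have := hu.2; dsimp; omega⟩

lemma reachable_of_reflTransGen {v : ℤ × ℤ} (h : ReflTransGen (ggEdge N t) (0, 0) v) :
    Reachable N t v := by
  induction h with
  | refl => exact ⟨⟨le_rfl, by positivity, by simp, by positivity⟩, le_rfl⟩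
  | tail _ he ih => exact ih.of_ggEdge he

lemma reflTransGen_of_reachable {i d : ℤ} (h : Reachable N t (i, d)) :
    ReflTransGen (ggEdge N t) (0, 0) (i, d) := by
  obtain ⟨⟨hi, hiN, hdt, hdt'⟩, hid⟩ := h
  by_cases h0 : i = 0 ∧ d = 0
  · obtain ⟨rfl, rfl⟩ := h0
    exact .refl
  by_cases hdiag : i + d = 0
  · refine (reflTransGen_of_reachable (i := i - 1) (d := d + 1) ?_).tail ?_
    · simp only [Reachable, ggVertex]; omega
    · simp only [ggEdge, ggVertex, Prod.mk.injEq]; omega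
  by_cases hi0 : i = 0
  · refine (reflTransGen_of_reachable (i := i) (d := d - 1) ?_).tail ?_
    · simp only [Reachable, ggVertex]; omega
    · simp only [ggEdge, ggVertex, Prod.mk.injEq, true_and]; omega
  · refine (reflTransGen_of_reachable (i := i - 1) (d := d) ?_).tail ?_
    · simp only [Reachable, ggVertex]; omega
    · simp only [ggEdge, ggVertex, Prod.mk.injEq, and_true]; omega
termination_by (2 * i + d).toNat
decreasing_by all_goals omega

lemma toNat_lt_of_ggEdge ⦃u v : ℤ × ℤ⦄ (he : ggEdge N t u v) :
    (2 * u.1 + u.2 + t).toNat < (2 * v.1 + v.2 + t).toNat := by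
  obtain ⟨⟨hu, -, hut, -⟩, -, rfl | rfl | rfl⟩ := he <;> dsimp <;> omega

lemma ggCost_le_ins {i d : ℤ} (hu : Reachable N t (i, d)) (hd : d + 1 ≤ t) :
    ggCost N t w (i, d + 1) ≤ ggCost N t w (i, d) + 1 := by
  have he : ggEdge N t (i, d) (i, d + 1) :=
    ⟨hu.1, by simp only [Reachable, ggVertex] at hu ⊢; omega, by simp⟩
  simpa [ggCost, ggWt] using cost_le_cost_add (wt := ggWt w) (reflTransGen_of_reachable hu) he

lemma ggCost_le_del {i d : ℤ} (hu : Reachable N t (i, d)) (hi : i + 1 ≤ N)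
    (hd : -(t : ℤ) ≤ d - 1) :
    ggCost N t w (i + 1, d - 1) ≤ ggCost N t w (i, d) + 1 := by
  have he : ggEdge N t (i, d) (i + 1, d - 1) :=
    ⟨hu.1, by simp only [Reachable, ggVertex] at hu ⊢; omega, by simp⟩
  simpa [ggCost, ggWt] using cost_le_cost_add (wt := ggWt w) (reflTransGen_of_reachable hu) he

lemma ggCost_le_vert {i d : ℤ} (hu : Reachable N t (i, d)) (hi : i + 1 ≤ N) :
    ggCost N t w (i + 1, d) ≤ ggCost N t w (i, d) + w (i + 1) d := by
  have he : ggEdge N t (i, d) (i + 1, d) :=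
    ⟨hu.1, by simp only [Reachable, ggVertex] at hu ⊢; omega, by simp⟩
  simpa [ggCost, ggWt] using cost_le_cost_add (wt := ggWt w) (reflTransGen_of_reachable hu) he

lemma potent_zero : Potent N t w (0, 0) := by
  have hL : ¬ DomL N t w (0, 0) := fun h => by simpa using h.2.1.2
  have hU : ¬ DomU N t w (0, 0) := fun h => by simpa using h.2.1.1.1
  exact .mk _ (absurd · hL) (absurd · hL) (absurd · hU) (absurd · hU)

lemma Potent.of_domL {v : ℤ × ℤ} (h : Potent N t w v) (hd : DomL N t w v) :
    Potent N t w (v.1, v.2 - 1) := by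
  cases h with | mk _ hL _ _ _ => exact hL hd

lemma Potent.of_domU {v : ℤ × ℤ} (h : Potent N t w v) (hd : DomU N t w v) :
    Potent N t w (v.1 - 1, v.2 + 1) := by
  cases h with | mk _ _ _ hU _ => exact hU hd

theorem potent_of_ggCost_le (hw1 : ∀ i d, w i d ≤ 1) {a b : ℤ} (hp : Reachable N t (a, b))
    (ha : a + 1 ≤ N)
    (hdel : Reachable N t (a + 1, b - 1) → ggCost N t w (a, b) ≤ ggCost N t w (a + 1, b - 1))
    (hins : Reachable N t (a, b + 1) → ggCost N t w (a, b) ≤ ggCost N t w (a, b + 1)) :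
    Potent N t w (a, b) := by
  refine .mk _ (fun hL => ?_) (fun hL => ?_) (fun hU => ?_) (fun hU => ?_)
  · obtain ⟨-, hq, hcq⟩ := hL
    dsimp only at hq hcq ⊢
    have hx : Reachable N t (a + 1, b - 1) := by
      simp only [Reachable, ggVertex] at hp hq ⊢; omega
    refine potent_of_ggCost_le hw1 hq ha (fun hr => ?_) (fun _ => ?_)
    · have := ggCost_le_ins (w := w) hr (by simp only [Reachable, ggVertex] at hx; omega)
      simp only [sub_add_cancel] at this
      have := hdel hx
      omega
    · simp only [sub_add_cancel]; omega
  · obtain ⟨-, hq, hcq⟩ := hL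
    dsimp only at hq hcq ⊢
    have hx : Reachable N t (a + 1, b - 1) := by
      simp only [Reachable, ggVertex] at hp hq ⊢; omega
    have := ggCost_le_vert (w := w) hq ha
    have := hdel hx
    have := hw1 (a + 1) (b - 1)
    omega
  · obtain ⟨-, hq, hcq⟩ := hU
    dsimp only at hq hcq ⊢
    refine potent_of_ggCost_le hw1 hq (by omega) (fun _ => ?_) (fun hr => ?_)
    · simp only [sub_add_cancel, add_sub_cancel_right]; omega
    · have hy : Reachable N t (a, b + 1) := by
        simp only [Reachable, ggVertex] at hp hr ⊢; omega
      have := ggCost_le_del (w := w) hr (by omega)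
        (by simp only [Reachable, ggVertex] at hy; omega)
      simp only [sub_add_cancel, add_sub_cancel_right] at this
      have := hins hy
      omega
  · obtain ⟨-, hq, hcq⟩ := hU
    dsimp only at hq hcq ⊢
    have hy : Reachable N t (a, b + 1) := by
      simp only [Reachable, ggVertex] at hp hq ⊢; omega
    have := ggCost_le_vert (w := w) hq (by omega)
    simp only [sub_add_cancel] at this
    have := hins hy
    have := hw1 a (b + 1)
    omega
termination_by ggCost N t w (a, b)
decreasing_by all_goals dsimp only at hcq; omega

theorem exists_potent_pred (hw1 : ∀ i d, w i d ≤ 1) (v : ℤ × ℤ)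
    (hv : ReflTransGen (ggEdge N t) (0, 0) v) (hv0 : v ≠ (0, 0)) (hp : Potent N t w v) :
    ∃ u, ReflTransGen (ggEdge N t) (0, 0) u ∧ ggEdge N t u v ∧
      ggCost N t w u + ggWt w u v = ggCost N t w v ∧ Potent N t w u := by
  have hvr := reachable_of_reflTransGen hv
  obtain ⟨i, d⟩ := v
  by_cases hL : DomL N t w (i, d)
  · exact ⟨_, reflTransGen_of_reachable hL.2.1, ⟨hL.2.1.1, hvr.1, by simp⟩,
      by simpa [ggWt] using hL.2.2, hp.of_domL hL⟩
  by_cases hU : DomU N t w (i, d)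
  · exact ⟨_, reflTransGen_of_reachable hU.2.1, ⟨hU.2.1.1, hvr.1, by simp⟩,
      by simpa [ggWt] using hU.2.2, hp.of_domU hU⟩
  obtain ⟨⟨a, b⟩, hu, he, hc⟩ : ∃ u, ReflTransGen (ggEdge N t) (0, 0) u ∧ ggEdge N t u (i, d) ∧
      ggCost N t w u + ggWt w u (i, d) = ggCost N t w (i, d) :=
    exists_pred_cost_add_eq hv hv0
  have hur := reachable_of_reflTransGen hu
  refine ⟨_, hu, he, hc, ?_⟩
  obtain ⟨-, -, h | h | h⟩ := he <;> obtain ⟨rfl, rfl⟩ := Prod.mk.inj h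
  · exact absurd ⟨hvr, by simpa using hur, by simpa [ggWt] using hc⟩ hU
  · exact absurd ⟨hvr, by simpa using hur, by simpa [ggWt] using hc⟩ hL
  · dsimp only at hvr hL hU
    simp only [ggWt, if_pos] at hc
    have ⟨⟨_, hN, hdt, ht⟩, _⟩ := hvr
    refine potent_of_ggCost_le hw1 hur hN (fun hx => ?_) (fun hy => ?_)
    · have := ggCost_le_ins (w := w) hx (by simpa using ht)
      simp only [sub_add_cancel] at this
      exact not_lt.1 fun h => hL ⟨hvr, hx, by dsimp only; omega⟩
    · have := ggCost_le_del (w := w) hy hN (by simpa using hdt)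
      simp only [add_sub_cancel_right] at this
      exact not_lt.1 fun h => hU ⟨hvr, by simpa using hy, by simp; omega⟩

end GridGraph

theorem stmt2_general (N t : ℕ) (w : ℤ → ℤ → ℕ)
    (hw1 : ∀ i d, w i d ≤ 1)
    (v : ℤ × ℤ) (hv : Reachable N t v) :
    ∃ l : List (ℤ × ℤ), IsPath (ggEdge N t) (0, 0) v l ∧
      pathCost (ggWt w) l = ggCost N t w v ∧
      ∃ k : ℕ, 1 ≤ k ∧ (∀ u ∈ l.take k, Potent N t w u) ∧
        ∀ u ∈ l.drop k, ¬ Potent N t w u := by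
  obtain ⟨l₁, l₂, hl, hcost, hne, h₁, h₂⟩ :=
    exists_optimal_path_with_prefix (wt := ggWt w) (fun v => (2 * v.1 + v.2 + t).toNat)
      toNat_lt_of_ggEdge potent_zero (exists_potent_pred hw1)
      (reflTransGen_of_reachable (i := v.1) (d := v.2) hv)
  refine ⟨l₁ ++ l₂, hl, hcost, l₁.length, List.length_pos_iff.2 hne, ?_, ?_⟩
  · rwa [List.take_left' rfl]
  · rwa [List.drop_left' rfl]

theorem stmt2 (N t : ℕ) (w : ℤ → ℤ → ℕ)
    (hw1 : ∀ i d, w i d ≤ 1)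
    (hw0 : ∀ i d : ℤ, ¬(1 ≤ i ∧ i ≤ (N : ℤ) ∧ -(t : ℤ) ≤ d ∧ d ≤ (t : ℤ)) → w i d = 0)
    (v : ℤ × ℤ) (hv : Reachable N t v) :
    ∃ l : List (ℤ × ℤ), IsPath (ggEdge N t) (0, 0) v l ∧
      pathCost (ggWt w) l = ggCost N t w v ∧
      ∃ k : ℕ, 1 ≤ k ∧ (∀ u ∈ l.take k, Potent N t w u) ∧
        ∀ u ∈ l.drop k, ¬ Potent N t w u :=
  stmt2_general N t w hw1 v hv

end Stmt2
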